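/- (Theorem 2, part 2: spinor transformation of the second (conjugate) equation.) Let D, D* ⊆ ℂ be open, let z : D* → D be holomorphic on D* with z'(ζ) ≠ 0 for all ζ ∈ D*, and let s : D* → ℂ be holomorphic on D* with s(ζ)² = z'(ζ) for all ζ ∈ D*. Let u : ℂ → ℂ and let ψ⁺ be real-differentiable on D with ∂_z̄ ψ⁺ = −conj(u)·conj(ψ⁺) on D. Define u*(ζ) = u(z(ζ))·|z'(ζ)| and ψ⁺*(ζ) = ψ⁺(z(ζ))·s(ζ) for ζ ∈ D*. Then ∂_ζ̄ ψ⁺* = −conj(u*)·conj(ψ⁺*) on D*. -/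

import Mathlib

open Complex

/-!
The operator `∂_z̄` obeys the chain rule `∂_ζ̄ (f ∘ z) = conj z' · (∂_z̄ f) ∘ z` for holomorphic `z`,
and is a derivation annihilating the holomorphic factor `s`. Hence
`∂_ζ̄ ψ⁺* = s · conj z' · (∂_z̄ ψ⁺) ∘ z`, and `s · conj (s²) = |s²| · conj s` turns the factor
`s · conj z'` into the weights `|z'|` and `conj s` of `u*` and `ψ⁺*`.
-/

/-- The Wirtinger derivative ∂_z̄ f(z) = (1/2)((fderiv ℝ f z) 1 + i·((fderiv ℝ f z) i)). -/
noncomputable def dzbar (f : ℂ → ℂ) (z : ℂ) : ℂ :=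
  (1 / 2 : ℂ) * ((fderiv ℝ f z) 1 + Complex.I * (fderiv ℝ f z) Complex.I)

/-- The Wirtinger derivative ∂_z f(z) = (1/2)((fderiv ℝ f z) 1 − i·((fderiv ℝ f z) i)). -/
noncomputable def dz (f : ℂ → ℂ) (z : ℂ) : ℂ :=
  (1 / 2 : ℂ) * ((fderiv ℝ f z) 1 - Complex.I * (fderiv ℝ f z) Complex.I)

open ComplexConjugate

theorem fderiv_apply_eq_dz_add_dzbar (f : ℂ → ℂ) (w c : ℂ) :
    fderiv ℝ f w c = c * dz f w + conj c * dzbar f w := by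
  have hc : c = c.re • (1 : ℂ) + c.im • I := by simp
  conv_lhs => rw [hc, map_add, map_smul, map_smul]
  rw [dz, dzbar]
  conv_rhs => rw [← Complex.re_add_im c]
  simp only [Complex.real_smul, map_add, map_mul, Complex.conj_ofReal, Complex.conj_I]
  ring_nf
  rw [Complex.I_sq]
  ring

theorem dzbar_comp_of_hasDerivAt {f g : ℂ → ℂ} {g' ζ : ℂ}
    (hf : DifferentiableAt ℝ f (g ζ)) (hg : HasDerivAt g g' ζ) :
    dzbar (f ∘ g) ζ = conj g' * dzbar f (g ζ) := by
  have hfg : fderiv ℝ (f ∘ g) ζ = (fderiv ℝ f (g ζ)).comp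
      ((ContinuousLinearMap.smulRight (1 : ℂ →L[ℂ] ℂ) g').restrictScalars ℝ) :=
    (hf.hasFDerivAt.comp ζ (hg.hasFDerivAt.restrictScalars ℝ)).fderiv
  rw [dzbar, hfg]
  simp only [ContinuousLinearMap.comp_apply, ContinuousLinearMap.coe_restrictScalars',
    ContinuousLinearMap.smulRight_apply, one_apply_eq_self, smul_eq_mul,
    fderiv_apply_eq_dz_add_dzbar f (g ζ), map_mul, map_one, Complex.conj_I]
  linear_combination (g' * dz f (g ζ) - conj g' * dzbar f (g ζ)) / 2 * Complex.I_mul_I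

theorem dzbar_eq_zero_of_differentiableAt {s : ℂ → ℂ} {ζ : ℂ} (hs : DifferentiableAt ℂ s ζ) :
    dzbar s ζ = 0 := by
  rw [dzbar, hs.fderiv_restrictScalars ℝ]
  have hI : fderiv ℂ s ζ I = I * fderiv ℂ s ζ 1 := by
    rw [← smul_eq_mul, ← map_smul, smul_eq_mul, mul_one]
  rw [ContinuousLinearMap.coe_restrictScalars', hI]
  linear_combination (1 / 2 * fderiv ℂ s ζ 1) * Complex.I_mul_I

theorem dzbar_mul {f g : ℂ → ℂ} {ζ : ℂ} (hf : DifferentiableAt ℝ f ζ)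
    (hg : DifferentiableAt ℝ g ζ) :
    dzbar (fun ξ => f ξ * g ξ) ζ = f ζ * dzbar g ζ + g ζ * dzbar f ζ := by
  simp only [dzbar, fderiv_fun_mul hf hg, add_apply, smul_apply, smul_eq_mul]
  ring

theorem mul_conj_sq (s : ℂ) : s * conj (s ^ 2) = (‖s ^ 2‖ : ℂ) * conj s := by
  rw [norm_pow, map_pow, Complex.ofReal_pow, ← Complex.mul_conj']
  ring

theorem statement9_general (D Dstar : Set ℂ)
    (z z' s : ℂ → ℂ) (hmaps : Set.MapsTo z Dstar D)
    (hz : ∀ ζ ∈ Dstar, HasDerivAt z (z' ζ) ζ)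
    (hs : ∀ ζ ∈ Dstar, DifferentiableAt ℂ s ζ)
    (hs2 : ∀ ζ ∈ Dstar, s ζ ^ 2 = z' ζ)
    (u ψp : ℂ → ℂ)
    (hψp : ∀ w ∈ D, DifferentiableAt ℝ ψp w)
    (heq : ∀ w ∈ D, dzbar ψp w = -(starRingEnd ℂ) (u w) * (starRingEnd ℂ) (ψp w)) :
    ∀ ζ ∈ Dstar,
      dzbar (fun ξ => ψp (z ξ) * s ξ) ζ
        = -(starRingEnd ℂ) (u (z ζ) * (‖z' ζ‖ : ℂ))
            * (starRingEnd ℂ) (ψp (z ζ) * s ζ) := by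
  intro ζ hζ
  have hψz : DifferentiableAt ℝ ψp (z ζ) := hψp _ (hmaps hζ)
  have hψ_comp : DifferentiableAt ℝ (ψp ∘ z) ζ :=
    hψz.comp ζ ((hz ζ hζ).differentiableAt.restrictScalars ℝ)
  calc dzbar (fun ξ => ψp (z ξ) * s ξ) ζ
      = s ζ * conj (z' ζ) * dzbar ψp (z ζ) := by
        change dzbar (fun ξ => (ψp ∘ z) ξ * s ξ) ζ = _
        rw [dzbar_mul hψ_comp ((hs ζ hζ).restrictScalars ℝ),
          dzbar_eq_zero_of_differentiableAt (hs ζ hζ), dzbar_comp_of_hasDerivAt hψz (hz ζ hζ)]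
        ring
    _ = _ := by
        rw [heq _ (hmaps hζ), ← hs2 ζ hζ, map_mul, map_mul, Complex.conj_ofReal]
        linear_combination -conj (u (z ζ)) * conj (ψp (z ζ)) * mul_conj_sq (s ζ)

/-- Theorem 2, part 2: if ∂_z̄ ψ⁺ = −conj u·conj ψ⁺ on D, then
ψ⁺*(ζ) = ψ⁺(z(ζ))·s(ζ) satisfies ∂_ζ̄ ψ⁺* = −conj u*·conj ψ⁺* with
u*(ζ) = u(z(ζ))·|z'(ζ)|. -/
theorem statement9 (D Dstar : Set ℂ) (hD : IsOpen D) (hDstar : IsOpen Dstar)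
    (z z' s : ℂ → ℂ) (hmaps : Set.MapsTo z Dstar D)
    (hz : ∀ ζ ∈ Dstar, HasDerivAt z (z' ζ) ζ)
    (hz' : ∀ ζ ∈ Dstar, z' ζ ≠ 0)
    (hs : ∀ ζ ∈ Dstar, DifferentiableAt ℂ s ζ)
    (hs2 : ∀ ζ ∈ Dstar, s ζ ^ 2 = z' ζ)
    (u ψp : ℂ → ℂ)
    (hψp : ∀ w ∈ D, DifferentiableAt ℝ ψp w)
    (heq : ∀ w ∈ D, dzbar ψp w = -(starRingEnd ℂ) (u w) * (starRingEnd ℂ) (ψp w)) :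
    ∀ ζ ∈ Dstar,
      dzbar (fun ξ => ψp (z ξ) * s ξ) ζ
        = -(starRingEnd ℂ) (u (z ζ) * (‖z' ζ‖ : ℂ))
            * (starRingEnd ℂ) (ψp (z ζ) * s ζ) :=
  statement9_general D Dstar z z' s hmaps hz hs hs2 u ψp hψp heq
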